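/- arXiv:2412.05526 — 2 statements merged into one kernel-verified Lean document; each statement's English description precedes it below -/
import Mathlib

section
/- Let H be a finite multiset of walks in a directed graph, one walk p(s,t) for each demand pair (s,t) in a set D of size k, all walks using edges from an edge set E_H with total cost OPT = Σ_{e∈E_H} σ(e) where σ : E → ℚ≥0. Then either (1) some vertex r lies on at least √k of these walks, in which case the union of the walks through r has cost at most OPT and serves at least √k demand pairs (density at most OPT/√k), or (2) every vertex lies on fewer than √k walks, in which case some single walk p(s,t) has cost Σ_{e∈p(s,t)} σ(e) (each edge counted once) at most √k·OPT/k = OPT/√k. -/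
open Finset

/-- The edge set of a walk given as its list of vertices: consecutive pairs. -/
def walkEdges {V : Type*} [DecidableEq V] (p : List V) : Finset (V × V) :=
  (p.zip p.tail).toFinset

lemma fst_mem_of_mem_walkEdges {V : Type*} [DecidableEq V] {p : List V} {e : V × V}
    (h : e ∈ walkEdges p) : e.1 ∈ p := by
  obtain ⟨u, v⟩ := e
  simp only [walkEdges, List.mem_toFinset] at h
  exact (List.of_mem_zip h).1

/-- junction-tree density dichotomy (Lemma sqrt-k-den). -/
theorem stmt_1 {V : Type*} [DecidableEq V] [Fintype V]
    (k : ℕ) (hk : 0 < k)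
    (w : Fin k → List V) (hw : ∀ d, w d ≠ [])
    (σ : V × V → ℝ) (hσ : ∀ e, 0 ≤ σ e)
    (EH : Finset (V × V)) (hEH : ∀ d, walkEdges (w d) ⊆ EH)
    (OPT : ℝ) (hOPT : OPT = ∑ e ∈ EH, σ e) :
    (∃ r : V,
        Real.sqrt k ≤ ((Finset.univ.filter fun d => r ∈ w d).card : ℝ) ∧
        ∑ e ∈ (Finset.univ.filter fun d => r ∈ w d).biUnion (fun d => walkEdges (w d)),
          σ e ≤ OPT)
    ∨ ((∀ r : V, ((Finset.univ.filter fun d => r ∈ w d).card : ℝ) < Real.sqrt k) ∧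
        ∃ d : Fin k, ∑ e ∈ walkEdges (w d), σ e ≤ OPT / Real.sqrt k) := by
  have hsqpos : 0 < Real.sqrt k := Real.sqrt_pos.mpr (by exact_mod_cast hk)
  by_cases hcase : ∃ r : V, Real.sqrt k ≤ ((Finset.univ.filter fun d => r ∈ w d).card : ℝ)
  · obtain ⟨r, hr⟩ := hcase
    refine Or.inl ⟨r, hr, ?_⟩
    rw [hOPT]
    apply Finset.sum_le_sum_of_subset_of_nonneg
    · intro e he
      obtain ⟨d, _, hd⟩ := Finset.mem_biUnion.mp he
      exact hEH d hd
    · intro e _ _; exact hσ e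
  · push_neg at hcase
    refine Or.inr ⟨hcase, ?_⟩
    -- total cost bound
    have key : ∑ d : Fin k, ∑ e ∈ walkEdges (w d), σ e ≤ Real.sqrt k * OPT := by
      have h1 : ∀ d : Fin k, ∑ e ∈ walkEdges (w d), σ e
          = ∑ e ∈ EH, (if e ∈ walkEdges (w d) then σ e else 0) := by
        intro d
        rw [Finset.sum_ite_mem, Finset.inter_eq_right.mpr (hEH d)]
      calc ∑ d : Fin k, ∑ e ∈ walkEdges (w d), σ e
          = ∑ e ∈ EH, ∑ d : Fin k, (if e ∈ walkEdges (w d) then σ e else 0) := by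
            rw [Finset.sum_comm]; exact Finset.sum_congr rfl fun d _ => h1 d
        _ = ∑ e ∈ EH, ((Finset.univ.filter fun d => e ∈ walkEdges (w d)).card : ℝ) * σ e := by
            refine Finset.sum_congr rfl fun e _ => ?_
            rw [Finset.sum_ite, Finset.sum_const, Finset.sum_const_zero, add_zero,
              nsmul_eq_mul]
        _ ≤ ∑ e ∈ EH, Real.sqrt k * σ e := by
            refine Finset.sum_le_sum fun e _ => ?_
            refine mul_le_mul_of_nonneg_right ?_ (hσ e)
            have hle : ((Finset.univ.filter fun d => e ∈ walkEdges (w d)).card : ℝ)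
                ≤ ((Finset.univ.filter fun d => e.1 ∈ w d).card : ℝ) := by
              exact_mod_cast Finset.card_le_card (fun d hd => by
                simp only [Finset.mem_filter, Finset.mem_univ, true_and] at *
                exact fst_mem_of_mem_walkEdges hd)
            exact hle.trans (hcase e.1).le
        _ = Real.sqrt k * OPT := by rw [hOPT, Finset.mul_sum]
    have hne : (Finset.univ : Finset (Fin k)).Nonempty := ⟨⟨0, hk⟩, Finset.mem_univ _⟩
    have hOPTnn : 0 ≤ OPT := hOPT ▸ Finset.sum_nonneg fun e _ => hσ e
    have havg : ∑ d : Fin k, ∑ e ∈ walkEdges (w d), σ e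
        ≤ ∑ _d : Fin k, OPT / Real.sqrt k := by
      rw [Finset.sum_const, Finset.card_univ, Fintype.card_fin, nsmul_eq_mul]
      refine key.trans (le_of_eq ?_)
      have hk2 : (k : ℝ) = Real.sqrt k * Real.sqrt k :=
        (Real.mul_self_sqrt (by positivity)).symm
      rw [mul_div_assoc', eq_div_iff hsqpos.ne']
      linear_combination (-OPT) * hk2
    obtain ⟨d, _, hd⟩ := Finset.exists_le_of_sum_le hne havg
    exact ⟨d, hd⟩
end

section
/- Conversely, if H̄ is a subgraph of the product graph Ḡ_r of total cost f containing, for each demand pair (s,t) ∈ D', a path from some terminal (s^t, I) to some terminal (t^s, J) with I + J ⪯ Bdgt(s,t), then there exists a subgraph Ĥ of the intersection graph Ĝ of total cost at most f containing, for each (s,t) ∈ D', a walk from s₊ to t₋ through r with resource consumption componentwise at most Bdgt(s,t). -/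
open Finset

/-- Resource consumption of a walk given by its list of vertices. -/
def resSum {V ι : Type*} (res : V → V → ι → ℤ) (p : List V) (i : ι) : ℤ :=
  ((p.zip p.tail).map fun e => res e.1 e.2 i).sum

/-- Edges of the product graph `Ḡ_r` (left part, right part, crossing edge). -/
def ProdEdge {V : Type*} {m : ℕ} (A : V → V → Prop) (res : V → V → Fin (m + 1) → ℤ)
    (tlo thi : Fin (m + 1) → ℤ) (r : V) :
    (V × (Fin (m + 1) → ℤ) × Bool) → (V × (Fin (m + 1) → ℤ) × Bool) → Prop :=
  fun a b =>
    ((∀ i, tlo i ≤ a.2.1 i ∧ a.2.1 i ≤ thi i) ∧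
     (∀ i, tlo i ≤ b.2.1 i ∧ b.2.1 i ≤ thi i) ∧
     ((a.2.2 = false ∧ b.2.2 = false ∧ A a.1 b.1 ∧
        ∀ i, res a.1 b.1 i = a.2.1 i - b.2.1 i) ∨
      (a.2.2 = true ∧ b.2.2 = true ∧ A a.1 b.1 ∧
        ∀ i, res a.1 b.1 i = b.2.1 i - a.2.1 i)))
    ∨ (a = (r, fun _ => 0, false) ∧ b = (r, fun _ => 0, true))

lemma resSum_singleton {V ι : Type*} (res : V → V → ι → ℤ) (v : V) (i : ι) :
    resSum res [v] i = 0 := by simp [resSum]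

lemma resSum_cons {V ι : Type*} (res : V → V → ι → ℤ) (u v : V) (p : List V)
    (hp : p.head? = some v) (i : ι) :
    resSum res (u :: p) i = res u v i + resSum res p i := by
  cases p with
  | nil => simp at hp
  | cons w t =>
    simp only [List.head?_cons, Option.some.injEq] at hp
    subst hp
    simp [resSum]

lemma getLast?_cons_of_ne_nil {α : Type*} (u : α) (p : List α) (hp : p ≠ []) :
    (u :: p).getLast? = p.getLast? := by
  cases p with
  | nil => exact absurd rfl hp
  | cons w t => simp

lemma sum_image_le_aux {α β : Type*} [DecidableEq α] [DecidableEq β] (s : Finset α) (g : α → β)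
    (h : β → ℝ) (hh : ∀ b, 0 ≤ h b) :
    ∑ b ∈ s.image g, h b ≤ ∑ a ∈ s, h (g a) := by
  induction s using Finset.induction with
  | empty => simp
  | @insert a s ha ih =>
    rw [Finset.image_insert, Finset.sum_insert ha]
    by_cases hg : g a ∈ s.image g
    · rw [Finset.insert_eq_self.mpr hg]
      have := hh (g a)
      linarith
    · rw [Finset.sum_insert hg]
      exact add_le_add_right ih _

/-- from a subgraph of the product graph of cost `f` connecting
suitable terminals for each demand pair, one obtains a subgraph of the
intersection graph of cost at most `f` with feasible walks through the root. -/
theorem stmt_11 {V : Type*} [DecidableEq V] (A : V → V → Prop) (m : ℕ)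
    (res : V → V → Fin (m + 1) → ℤ) (σ : V → V → ℝ) (hσ : ∀ u v, 0 ≤ σ u v)
    (tlo thi : Fin (m + 1) → ℤ)
    (r : V) (D' : Set (V × V)) (Bdgt : V × V → Fin (m + 1) → ℤ)
    (F : Finset ((V × (Fin (m + 1) → ℤ) × Bool) × (V × (Fin (m + 1) → ℤ) × Bool)))
    (f : ℝ)
    (hf : f = ∑ e ∈ F, (if e.1.2.2 = e.2.2.2 then σ e.1.1 e.2.1 else 0))
    (hconn : ∀ st ∈ D', ∃ I J : Fin (m + 1) → ℤ,
      (∀ i, tlo i ≤ I i ∧ I i ≤ thi i) ∧ (∀ i, tlo i ≤ J i ∧ J i ≤ thi i) ∧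
      (∀ i, I i + J i ≤ Bdgt st i) ∧
      Relation.ReflTransGen
        (fun a b => (a, b) ∈ F ∧ ProdEdge A res tlo thi r a b)
        (st.1, I, false) (st.2, J, true)) :
    ∃ Hp Hm : Finset (V × V),
      ((∑ e ∈ Hp, σ e.1 e.2) + ∑ e ∈ Hm, σ e.1 e.2) ≤ f ∧
      ∀ st ∈ D', ∃ p q : List V,
        p ≠ [] ∧ p.Chain' (fun u v => (u, v) ∈ Hp ∧ A u v) ∧
        p.head? = some st.1 ∧ p.getLast? = some r ∧
        q ≠ [] ∧ q.Chain' (fun u v => (u, v) ∈ Hm ∧ A u v) ∧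
        q.head? = some r ∧ q.getLast? = some st.2 ∧
        (∀ i, resSum res p i + resSum res q i ≤ Bdgt st i) := by
  classical
  set Hp : Finset (V × V) :=
    (F.filter (fun e => e.1.2.2 = false ∧ e.2.2.2 = false)).image
      (fun e => (e.1.1, e.2.1)) with hHp
  set Hm : Finset (V × V) :=
    (F.filter (fun e => e.1.2.2 = true ∧ e.2.2.2 = true)).image
      (fun e => (e.1.1, e.2.1)) with hHm
  refine ⟨Hp, Hm, ?_, ?_⟩
  · -- cost bound
    have h1 : (∑ e ∈ Hp, σ e.1 e.2) ≤
        ∑ e ∈ F.filter (fun e => e.1.2.2 = false ∧ e.2.2.2 = false), σ e.1.1 e.2.1 :=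
      sum_image_le_aux _ _ (fun b : V × V => σ b.1 b.2) (fun b => hσ _ _)
    have h2 : (∑ e ∈ Hm, σ e.1 e.2) ≤
        ∑ e ∈ F.filter (fun e => e.1.2.2 = true ∧ e.2.2.2 = true), σ e.1.1 e.2.1 :=
      sum_image_le_aux _ _ (fun b : V × V => σ b.1 b.2) (fun b => hσ _ _)
    have h3 : (∑ e ∈ F.filter (fun e => e.1.2.2 = false ∧ e.2.2.2 = false), σ e.1.1 e.2.1)
        + (∑ e ∈ F.filter (fun e => e.1.2.2 = true ∧ e.2.2.2 = true), σ e.1.1 e.2.1) ≤ f := by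
      rw [hf, Finset.sum_filter, Finset.sum_filter, ← Finset.sum_add_distrib]
      refine Finset.sum_le_sum fun e _ => ?_
      rcases hb1 : e.1.2.2 <;> rcases hb2 : e.2.2.2 <;>
        simp [hb1, hb2, hσ e.1.1 e.2.1]
    linarith
  · -- walks
    intro st hst
    obtain ⟨I, J, hI, hJ, hIJ, hchain⟩ := hconn st hst
    -- key claim proved by head induction on the chain
    set R := (fun a b => (a, b) ∈ F ∧ ProdEdge A res tlo thi r a b) with hR
    set Claim : (V × (Fin (m + 1) → ℤ) × Bool) → Prop := fun a =>
      (a.2.2 = true → ∃ q : List V, q ≠ [] ∧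
          q.Chain' (fun u v => (u, v) ∈ Hm ∧ A u v) ∧
          q.head? = some a.1 ∧ q.getLast? = some st.2 ∧
          ∀ i, resSum res q i = J i - a.2.1 i) ∧
      (a.2.2 = false → ∃ p q : List V, p ≠ [] ∧
          p.Chain' (fun u v => (u, v) ∈ Hp ∧ A u v) ∧
          p.head? = some a.1 ∧ p.getLast? = some r ∧ q ≠ [] ∧
          q.Chain' (fun u v => (u, v) ∈ Hm ∧ A u v) ∧
          q.head? = some r ∧ q.getLast? = some st.2 ∧
          (∀ i, resSum res p i = a.2.1 i) ∧ (∀ i, resSum res q i = J i)) with hClaim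
    have key : Claim (st.1, I, false) := by
      refine Relation.ReflTransGen.head_induction_on hchain ?_ ?_
      · -- base case : a = (st.2, J, true)
        constructor
        · intro _
          exact ⟨[st.2], by simp, List.isChain_singleton _, by simp, by simp,
            fun i => by simp [resSum_singleton]⟩
        · intro h; simp at h
      · -- head step
        rintro a c ⟨hmem, hedge⟩ _ ihc
        rcases hedge with (⟨_, _, (⟨ha, hc, hA, hres⟩ | ⟨ha, hc, hA, hres⟩)⟩ | ⟨ha, hc⟩)
        · -- false edge
          constructor
          · intro h; rw [h] at ha; exact absurd ha (by simp)
          · intro _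
            obtain ⟨p, q, hp0, hpC, hph, hpl, hq0, hqC, hqh, hql, hpr, hqr⟩ := ihc.2 hc
            have hmemP : (a.1, c.1) ∈ Hp := by
              rw [hHp]
              exact Finset.mem_image.mpr ⟨(a, c),
                Finset.mem_filter.mpr ⟨hmem, ha, hc⟩, rfl⟩
            refine ⟨a.1 :: p, q, by simp, ?_, by simp, ?_, hq0, hqC, hqh, hql, ?_, hqr⟩
            · apply List.isChain_cons.mpr
              exact ⟨fun v hv => by rw [hph] at hv; cases hv; exact ⟨hmemP, hA⟩, hpC⟩
            · rw [getLast?_cons_of_ne_nil _ _ hp0]; exact hpl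
            · intro i
              rw [resSum_cons res a.1 c.1 p hph i, hres i, hpr i]
              ring
        · -- true edge
          constructor
          · intro _
            obtain ⟨q, hq0, hqC, hqh, hql, hqr⟩ := ihc.1 hc
            have hmemM : (a.1, c.1) ∈ Hm := by
              rw [hHm]
              exact Finset.mem_image.mpr ⟨(a, c),
                Finset.mem_filter.mpr ⟨hmem, ha, hc⟩, rfl⟩
            refine ⟨a.1 :: q, by simp, ?_, by simp, ?_, ?_⟩
            · apply List.isChain_cons.mpr
              exact ⟨fun v hv => by rw [hqh] at hv; cases hv; exact ⟨hmemM, hA⟩, hqC⟩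
            · rw [getLast?_cons_of_ne_nil _ _ hq0]; exact hql
            · intro i
              rw [resSum_cons res a.1 c.1 q hqh i, hres i, hqr i]
              ring
          · intro h; rw [h] at ha; exact absurd ha (by simp)
        · -- crossing edge
          subst ha; subst hc
          constructor
          · intro h; simp at h
          · intro _
            obtain ⟨q, hq0, hqC, hqh, hql, hqr⟩ := ihc.1 rfl
            refine ⟨[r], q, by simp, List.isChain_singleton _, by simp, by simp,
              hq0, hqC, hqh, hql, fun i => by simp [resSum_singleton],
              fun i => by rw [hqr i]; simp⟩
    obtain ⟨p, q, hp0, hpC, hph, hpl, hq0, hqC, hqh, hql, hpr, hqr⟩ := key.2 rfl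
    exact ⟨p, q, hp0, hpC, hph, hpl, hq0, hqC, hqh, hql,
      fun i => by rw [hpr i, hqr i]; exact hIJ i⟩
end
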